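/- arXiv:1511.03424 — 2 statements merged into one kernel-verified Lean document; each statement's English description precedes it below -/
import Mathlib

section
/- Let μ ∈ ℂ with |μ| > 1 and let p ≥ 2 be an integer. Suppose ξ₁, ξ₂ : ℂ² × [0,∞) → ℂ are as in the context and satisfy ξ₁(μᵖz₁ + z₂ᵖ, μz₂, φ(x)) = μᵖ·ξ₁(z₁,z₂,x) + (ξ₂(z₁,z₂,x))ᵖ and ξ₂(μᵖz₁ + z₂ᵖ, μz₂, φ(x)) = μ·ξ₂(z₁,z₂,x) for all (z₁,z₂) ∈ ℂ² and x ≥ 0. Then there exist continuous functions a₀, a₁, …, a_{p−1}, b : [0,∞) → ℂ, all vanishing at 0, with b(φ(x)) = μ·b(x) and aⱼ(φ(x)) = μ^{p−j}·aⱼ(x) + cⱼ·b(x)^{p−j} for 0 ≤ j ≤ p−1, where cⱼ = C(p,j)·μ^{−j} (C(p,j) the binomial coefficient), such that ξ₁(z₁,z₂,x) = z₁ + Σ_{j=0}^{p−1} aⱼ(x)·z₂ʲ and ξ₂(z₁,z₂,x) = z₂ + b(x). (Classification in Case 5 of Section 3.2, underlying Theorem 3.13) -/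
/-!
Write `G (z₁, z₂) = (μᵖ z₁ + z₂ᵖ, μ z₂)`. Every `x ≥ 0` has a backward `φ`-orbit `tₙ → 0`, and
`G⁻¹` contracts at rate `|μ|⁻¹`. The defect `ξ₂ (z, x) - z₂ - ξ₂ (0, 0, x)` gets multiplied by `μ`
under `(G, φ)`; pulling it back `n` steps and applying the Schwarz lemma to the leaf map at `tₙ`,
which is uniformly small near the boundary, shows that it vanishes. The same argument, with
factor `μᵖ`, applied to `ξ₁ (z₁, z₂, x) - ξ₁ (0, z₂, x) - z₁` shows that `ξ₁` is a translate in
`z₁`. What remains, `g x z = ξ₁ (0, z, x)`, satisfies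
`g (φ x) (μ z) = μᵖ g x z + (z + b x)ᵖ - zᵖ`; its Taylor coefficients of order `j ≥ p` grow by
`|μ|^(j-p)` along the backward orbit while tending to `0` by Cauchy's estimate, so they vanish,
and those of order `j < p` are the `aⱼ`.
-/

open Complex Metric Set Filter Topology

def BackwardOrbitsTendToZero (φ : ℝ → ℝ) : Prop :=
  ∀ x, 0 ≤ x → ∃ t : ℕ → ℝ,
    t 0 = x ∧ (∀ n, 0 ≤ t n) ∧ (∀ n, φ (t (n + 1)) = t n) ∧ Tendsto t atTop (𝓝 0)

/-- Pulling back along a right inverse of `φ` decreases, so the orbit converges to a fixed point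
of `φ` in `[0, ∞)`, which can only be `0`. -/
theorem backwardOrbitsTendToZero_of_expanding {φ : ℝ → ℝ} (hcont : ContinuousOn φ (Ici 0))
    (hsurj : SurjOn φ (Ici 0) (Ici 0)) (hexp : ∀ x, 0 < x → x < φ x) :
    BackwardOrbitsTendToZero φ := by
  intro x hx
  set ψ := Function.invFunOn φ (Ici 0)
  have hψ : ∀ y, 0 ≤ y → 0 ≤ ψ y ∧ φ (ψ y) = y := fun y hy =>
    ⟨Function.invFunOn_mem (hsurj hy), Function.invFunOn_eq (hsurj hy)⟩
  have hψ_le : ∀ y, 0 ≤ y → ψ y ≤ y := fun y hy => by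
    by_contra! hlt
    have := hexp _ (hy.trans_lt hlt)
    rw [(hψ y hy).2] at this
    exact (hlt.trans this).false
  set t : ℕ → ℝ := fun n => ψ^[n] x
  have ht_succ : ∀ n, t (n + 1) = ψ (t n) := fun n => Function.iterate_succ_apply' ψ n x
  have ht₀ : ∀ n, 0 ≤ t n := by
    intro n
    induction n with
    | zero => exact hx
    | succ n ih => rw [ht_succ]; exact (hψ _ ih).1
  have hstep : ∀ n, φ (t (n + 1)) = t n := fun n => by rw [ht_succ]; exact (hψ _ (ht₀ n)).2
  have hanti : Antitone t := antitone_nat_of_succ_le fun n => by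
    rw [ht_succ]; exact hψ_le _ (ht₀ n)
  have hlim := tendsto_atTop_ciInf hanti ⟨0, by rintro _ ⟨n, rfl⟩; exact ht₀ n⟩
  set L := ⨅ n, t n
  have hL₀ : 0 ≤ L := le_ciInf ht₀
  have hfix : φ L = L := by
    have hlim' : Tendsto (fun n => t (n + 1)) atTop (𝓝[Ici 0] L) :=
      tendsto_nhdsWithin_iff.2 ⟨hlim.comp (tendsto_add_atTop_nat 1), .of_forall fun n => ht₀ _⟩
    exact tendsto_nhds_unique ((hcont L hL₀).tendsto.comp hlim')
      (by simpa only [Function.comp_def, hstep] using hlim)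
  obtain hL | hL := hL₀.lt_or_eq
  · exact absurd hfix (hexp L hL).ne'
  · exact ⟨t, rfl, ht₀, hstep, hL ▸ hlim⟩

section Families

variable {E : Type*} [NormedAddCommGroup E] [NormedSpace ℂ E]

/-- Along the orbit, `F (t n)` is `ε`-small on a ball of fixed radius around its zero `c n`, so by
the Schwarz lemma `‖F (t n) (w n)‖ ≤ ε ‖w n - c n‖` with `ε → 0`, while `‖r‖ ^ n ‖w n - c n‖` stays
bounded. -/
theorem apply_eq_zero_of_forall_eq_mul_succ [ProperSpace E] {F : ℝ → E → ℂ}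
    (hF : ContinuousOn ↿F (Ici 0 ×ˢ univ)) (hF₀ : ∀ w, F 0 w = 0)
    (hd : ∀ s, 0 ≤ s → Differentiable ℂ (F s))
    {t : ℕ → ℝ} (ht : ∀ n, 0 ≤ t n) (hlim : Tendsto t atTop (𝓝 0))
    {c w : ℕ → E} {r : ℂ} {R K : ℝ} (hr : 1 ≤ ‖r‖) (hc : ∀ n, ‖c n‖ ≤ R)
    (hK : ∀ n, ‖r‖ ^ n * ‖w n - c n‖ ≤ K) (hFc : ∀ n, F (t n) (c n) = 0)
    (hstep : ∀ n, F (t n) (w n) = r * F (t (n + 1)) (w (n + 1))) :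
    F (t 0) (w 0) = 0 := by
  have hchain : ∀ n, F (t 0) (w 0) = r ^ n * F (t n) (w n) := by
    intro n
    induction n with
    | zero => simp
    | succ n ih => rw [ih, hstep, pow_succ, mul_assoc]
  have hwc : ∀ n, ‖w n - c n‖ ≤ K := fun n =>
    (le_mul_of_one_le_left (norm_nonneg _) (one_le_pow₀ hr)).trans (hK n)
  have hK₀ : 0 ≤ K := (norm_nonneg _).trans (hwc 0)
  have ht' : Tendsto t atTop (𝓝[Ici 0] 0) :=
    tendsto_nhdsWithin_iff.2 ⟨hlim, .of_forall ht⟩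
  refine norm_le_zero_iff.1 (le_of_forall_pos_le_add fun ε hε => ?_)
  obtain ⟨v, hv, hsmall⟩ := (isCompact_closedBall (0 : E) (R + (K + 1))).mem_uniformity_of_prod
    (hF.mono (prod_mono subset_rfl (subset_univ _))) self_mem_Ici (dist_mem_uniformity hε)
  obtain ⟨n, hn⟩ := (ht'.eventually_mem hv).exists
  have hmaps : MapsTo (F (t n)) (ball (c n) (K + 1)) (closedBall (F (t n) (c n)) ε) := by
    intro y hy
    have hy' : ‖y‖ ≤ R + (K + 1) := by
      calc ‖y‖ ≤ ‖c n‖ + ‖y - c n‖ := norm_le_norm_add_norm_sub' y (c n)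
        _ ≤ R + (K + 1) := add_le_add (hc n) (mem_ball_iff_norm.1 hy).le
    have hy_small : dist (F (t n) y) (F 0 y) < ε :=
      hsmall (t n) hn y (mem_closedBall_zero_iff.2 hy')
    rw [hFc, mem_closedBall, ← hF₀ y]
    exact hy_small.le
  have hschwarz := dist_le_div_mul_dist_of_mapsTo_ball (hd _ (ht n)).differentiableOn hmaps
    (mem_ball_iff_norm.2 ((hwc n).trans_lt (lt_add_one K)))
  rw [hFc, dist_zero_right, dist_eq_norm] at hschwarz
  calc ‖F (t 0) (w 0)‖ = ‖r‖ ^ n * ‖F (t n) (w n)‖ := by rw [hchain n, norm_mul, norm_pow]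
    _ ≤ ‖r‖ ^ n * (ε / (K + 1) * ‖w n - c n‖) := by gcongr
    _ = ε / (K + 1) * (‖r‖ ^ n * ‖w n - c n‖) := by ring
    _ ≤ ε / (K + 1) * K := by gcongr; exact hK n
    _ ≤ 0 + ε := by
      rw [zero_add, div_mul_eq_mul_div, div_le_iff₀ (by positivity)]
      nlinarith

end Families

section Coefficients

theorem continuousOn_iteratedDeriv {X : Type*} [TopologicalSpace X] {F : X → ℂ → ℂ} {s : Set X}
    (hF : ContinuousOn ↿F (s ×ˢ univ)) (hd : ∀ x ∈ s, Differentiable ℂ (F x)) (j : ℕ) (c : ℂ) :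
    ContinuousOn (fun x => iteratedDeriv j (F x) c) s := by
  intro x hx
  refine Metric.tendsto_nhds.2 fun ε hε => ?_
  have hε' : 0 < ε / (2 * j.factorial) := by positivity
  obtain ⟨v, hv, hclose⟩ := (isCompact_sphere c 1).mem_uniformity_of_prod
    (hF.mono (prod_mono subset_rfl (subset_univ _))) hx (dist_mem_uniformity hε')
  filter_upwards [hv, self_mem_nhdsWithin] with y hy hys
  have hcauchy := norm_iteratedDeriv_le_of_forall_mem_sphere_norm_le j one_pos
    ((hd y hys).sub (hd x hx)).diffContOnCl fun z hz => by
      have hz_close : dist (F y z) (F x z) < _ := hclose y hy z hz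
      rw [Pi.sub_apply, ← dist_eq_norm]
      exact hz_close.le
  rw [iteratedDeriv_sub (hd y hys).contDiff.contDiffAt (hd x hx).contDiff.contDiffAt] at hcauchy
  rw [dist_eq_norm]
  calc _ ≤ j.factorial * (ε / (2 * j.factorial)) / 1 ^ j := hcauchy
    _ < ε := by
      rw [one_pow, div_one]
      field_simp
      linarith

theorem eq_sum_range_of_iteratedDeriv_eq_zero {f : ℂ → ℂ} (hf : Differentiable ℂ f)
    {p : ℕ} (h : ∀ j, p ≤ j → iteratedDeriv j f 0 = 0) (z : ℂ) :
    f z = ∑ j ∈ Finset.range p, iteratedDeriv j f 0 / j.factorial * z ^ j := by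
  refine (hasSum_taylorSeries_of_entire hf 0 z).unique
    (hasSum_sum_of_ne_finset_zero fun j hj => ?_) |>.trans (Finset.sum_congr rfl fun j _ => ?_)
  · simp [h j (by simpa using hj)]
  · simp only [sub_zero, smul_eq_mul]
    ring

theorem iteratedDeriv_zero_of_comp_mul_eq {f g h : ℂ → ℂ} (hf : Differentiable ℂ f)
    (hg : Differentiable ℂ g) (hh : Differentiable ℂ h) {μ a : ℂ}
    (heq : ∀ z, f (μ * z) = a * g z + h z) (j : ℕ) :
    μ ^ j * iteratedDeriv j f 0 = a * iteratedDeriv j g 0 + iteratedDeriv j h 0 := by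
  have hcomp := congrFun (iteratedDeriv_comp_const_mul (n := j) hf.contDiff μ) 0
  rw [mul_zero] at hcomp
  rw [← hcomp, funext heq, iteratedDeriv_fun_add ((hg.const_mul a).contDiff.contDiffAt)
    hh.contDiff.contDiffAt, iteratedDeriv_const_mul a hg.contDiff.contDiffAt]

theorem iteratedDeriv_add_const_pow_sub_pow {𝕜 : Type*} [NontriviallyNormedField 𝕜] (c : 𝕜)
    (p j : ℕ) :
    iteratedDeriv j (fun z : 𝕜 => (z + c) ^ p - z ^ p) 0
      = p.descFactorial j * (c ^ (p - j) - 0 ^ (p - j)) := by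
  rw [iteratedDeriv_fun_sub ((contDiff_id.add contDiff_const).pow p).contDiffAt
    (contDiff_id.pow p).contDiffAt, congrFun (iteratedDeriv_comp_add_const j (· ^ p) c) 0]
  simp [mul_sub]

end Coefficients

section TriangularMap

variable (μ : ℂ) (p : ℕ)

def triangularMap (w : ℂ × ℂ) : ℂ × ℂ := (μ ^ p * w.1 + w.2 ^ p, μ * w.2)

noncomputable def triangularMapInv (w : ℂ × ℂ) : ℂ × ℂ := ((w.1 - (w.2 / μ) ^ p) / μ ^ p, w.2 / μ)

/-- A weight that `triangularMapInv` contracts by the factor `‖μ‖` when `1 < ‖μ‖` and `2 ≤ p`: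
the term `‖w.2‖ ^ p / (‖μ‖ - 1)` absorbs the forcing `(w.2 / μ) ^ p` in the first coordinate. -/
noncomputable def triangularWeight (w : ℂ × ℂ) : ℝ := max ‖w‖ (‖w.2‖ ^ p / (‖μ‖ - 1))

variable {μ p}

theorem triangularMap_triangularMapInv (hμ : μ ≠ 0) (w : ℂ × ℂ) :
    triangularMap μ p (triangularMapInv μ p w) = w := by
  simp [triangularMap, triangularMapInv, mul_div_cancel₀, hμ]

theorem iterate_triangularMapInv_eq (hμ : μ ≠ 0) (w : ℂ × ℂ) (n : ℕ) :
    (triangularMapInv μ p)^[n] w = triangularMap μ p ((triangularMapInv μ p)^[n + 1] w) := by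
  rw [Function.iterate_succ_apply', triangularMap_triangularMapInv hμ]

theorem iterate_triangularMapInv_sub {P Q : ℂ × ℂ} (h : P.2 = Q.2) (n : ℕ) :
    (triangularMapInv μ p)^[n] P - (triangularMapInv μ p)^[n] Q
      = ((P.1 - Q.1) / (μ ^ p) ^ n, 0) := by
  induction n generalizing P Q with
  | zero => simp [Prod.ext_iff, h]
  | succ n ih =>
    rw [Function.iterate_succ_apply, Function.iterate_succ_apply,
      ih (by simp only [triangularMapInv, h])]
    simp only [triangularMapInv, h, pow_succ']
    ring_nf

theorem norm_le_triangularWeight (w : ℂ × ℂ) : ‖w‖ ≤ triangularWeight μ p w := le_max_left _ _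

theorem triangularWeight_triangularMapInv_le (hμ : 1 < ‖μ‖) (hp : 2 ≤ p) (w : ℂ × ℂ) :
    ‖μ‖ * triangularWeight μ p (triangularMapInv μ p w) ≤ triangularWeight μ p w := by
  set m := ‖μ‖
  set N := triangularWeight μ p w
  have hm : 0 < m - 1 := sub_pos.2 hμ
  have hw₁ : ‖w.1‖ ≤ N := (norm_fst_le w).trans (le_max_left _ _)
  have hw₂ : ‖w.2‖ ≤ N := (norm_snd_le w).trans (le_max_left _ _)
  have hw₂p : ‖w.2‖ ^ p ≤ N * (m - 1) := (div_le_iff₀ hm).1 (le_max_right _ _)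
  have hmp : m * m ≤ m ^ p := by
    simpa [sq] using pow_le_pow_right₀ hμ.le hp
  have hm_le : m ≤ m ^ p := le_trans (by nlinarith) hmp
  have hfst : m * ‖(w.1 - (w.2 / μ) ^ p) / μ ^ p‖ ≤ N := by
    rw [norm_div, norm_pow, mul_div_assoc', div_le_iff₀ (by positivity)]
    calc m * ‖w.1 - (w.2 / μ) ^ p‖ ≤ m * (N + N * (m - 1) / m ^ p) := by
          gcongr
          refine (norm_sub_le _ _).trans (add_le_add hw₁ ?_)
          rw [norm_pow, norm_div, div_pow]
          gcongr
      _ ≤ m * (N + N * (m - 1)) := by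
          gcongr
          exact div_le_self (by nlinarith [(norm_nonneg _).trans hw₁]) (by nlinarith)
      _ ≤ N * m ^ p := by nlinarith [(norm_nonneg _).trans hw₁]
  simp only [triangularWeight, triangularMapInv, Prod.norm_def]
  rw [mul_max_of_nonneg _ _ (norm_nonneg μ), mul_max_of_nonneg _ _ (norm_nonneg μ)]
  refine max_le (max_le hfst ?_) ?_
  · rw [norm_div, mul_div_cancel₀ _ (by positivity)]
    exact hw₂
  · rw [norm_div, div_pow, div_div, mul_div_assoc', div_le_iff₀ (by positivity)]
    calc m * ‖w.2‖ ^ p ≤ m ^ p * (N * (m - 1)) := by gcongr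
      _ = N * (m ^ p * (m - 1)) := by ring

theorem norm_iterate_triangularMapInv_le (hμ : 1 < ‖μ‖) (hp : 2 ≤ p) (w : ℂ × ℂ) (n : ℕ) :
    ‖μ‖ ^ n * ‖(triangularMapInv μ p)^[n] w‖ ≤ triangularWeight μ p w := by
  induction n generalizing w with
  | zero => simpa using norm_le_triangularWeight w
  | succ n ih =>
    rw [Function.iterate_succ_apply, pow_succ', mul_assoc]
    calc _ ≤ ‖μ‖ * triangularWeight μ p (triangularMapInv μ p w) := by gcongr; exact ih _
      _ ≤ _ := triangularWeight_triangularMapInv_le hμ hp w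

end TriangularMap

section HighCoefficients

variable {μ : ℂ} {p : ℕ} {φ : ℝ → ℝ}

theorem iteratedDeriv_eq_zero_of_pow_mul_eq {g : ℝ → ℂ → ℂ} (hg : ContinuousOn ↿g (Ici 0 ×ˢ univ))
    (hd : ∀ s, 0 ≤ s → Differentiable ℂ (g s)) (hg₀ : ∀ z, g 0 z = 0)
    (horbit : BackwardOrbitsTendToZero φ) (hμ : 1 ≤ ‖μ‖) {j : ℕ} (hpj : p ≤ j)
    (hrel : ∀ s, 0 ≤ s → μ ^ j * iteratedDeriv j (g (φ s)) 0 = μ ^ p * iteratedDeriv j (g s) 0)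
    {x : ℝ} (hx : 0 ≤ x) : iteratedDeriv j (g x) 0 = 0 := by
  set D : ℝ → ℂ := fun s => iteratedDeriv j (g s) 0
  obtain ⟨t, ht0, ht, hstep, hlim⟩ := horbit x hx
  have hD₀ : D 0 = 0 := by simp [D, funext hg₀]
  have hDt : Tendsto (fun n => D (t n)) atTop (𝓝 0) := hD₀ ▸
    ((continuousOn_iteratedDeriv hg hd j 0 0 self_mem_Ici).tendsto.comp
      (tendsto_nhdsWithin_iff.2 ⟨hlim, .of_forall ht⟩))
  have hmono : Monotone fun n => ‖D (t n)‖ := monotone_nat_of_le_succ fun n => by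
    have h := congrArg norm (hrel _ (ht (n + 1)))
    rw [hstep, norm_mul, norm_mul, norm_pow, norm_pow] at h
    have hle : ‖μ‖ ^ p * ‖D (t n)‖ ≤ ‖μ‖ ^ p * ‖D (t (n + 1))‖ :=
      h ▸ mul_le_mul_of_nonneg_right (pow_le_pow_right₀ hμ hpj) (norm_nonneg _)
    exact le_of_mul_le_mul_left hle (by positivity)
  have hDt' : Tendsto (fun n => ‖D (t n)‖) atTop (𝓝 0) := by simpa using hDt.norm
  exact norm_le_zero_iff.1 (ge_of_tendsto hDt' (.of_forall fun n => ht0 ▸ hmono n.zero_le))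

/-- The `a j x` are the Taylor coefficients of `g x` at `0`. -/
theorem exists_coeffs_of_functional_eq {g : ℝ → ℂ → ℂ} {b : ℝ → ℂ}
    (hg : ContinuousOn ↿g (Ici 0 ×ˢ univ)) (hd : ∀ s, 0 ≤ s → Differentiable ℂ (g s))
    (hg₀ : ∀ z, g 0 z = 0) (hφ : MapsTo φ (Ici 0) (Ici 0)) (horbit : BackwardOrbitsTendToZero φ)
    (hμ : 1 ≤ ‖μ‖)
    (hrel : ∀ s, 0 ≤ s → ∀ z, g (φ s) (μ * z) = μ ^ p * g s z + ((z + b s) ^ p - z ^ p)) :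
    ∃ a : Fin p → ℝ → ℂ,
      (∀ j, ContinuousOn (a j) (Ici 0)) ∧ (∀ j, a j 0 = 0) ∧
      (∀ j : Fin p, ∀ x, 0 ≤ x →
        a j (φ x) = μ ^ (p - (j : ℕ)) * a j x
          + ((p.choose (j : ℕ) : ℂ) / μ ^ (j : ℕ)) * (b x) ^ (p - (j : ℕ))) ∧
      ∀ x, 0 ≤ x → ∀ z, g x z = ∑ j : Fin p, a j x * z ^ (j : ℕ) := by
  have hμ₀ : μ ≠ 0 := norm_pos_iff.1 (one_pos.trans_le hμ)
  have hcoeff : ∀ s, 0 ≤ s → ∀ j : ℕ, μ ^ j * iteratedDeriv j (g (φ s)) 0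
      = μ ^ p * iteratedDeriv j (g s) 0 + p.descFactorial j * (b s ^ (p - j) - 0 ^ (p - j)) :=
    fun s hs j => iteratedDeriv_add_const_pow_sub_pow (b s) p j ▸
      iteratedDeriv_zero_of_comp_mul_eq (hd _ (hφ hs)) (hd s hs)
        (((differentiable_id.add_const _).pow p).sub (differentiable_id.pow p)) (hrel s hs) j
  have hhigh : ∀ j, p ≤ j → ∀ x, 0 ≤ x → iteratedDeriv j (g x) 0 = 0 := fun j hj x hx =>
    iteratedDeriv_eq_zero_of_pow_mul_eq hg hd hg₀ horbit hμ hj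
      (fun s hs => by simpa [Nat.sub_eq_zero_of_le hj] using hcoeff s hs j) hx
  refine ⟨fun j x => iteratedDeriv j (g x) 0 / (j : ℕ).factorial,
    fun j => (continuousOn_iteratedDeriv hg hd j 0).div_const _,
    fun j => by simp [funext hg₀], fun j x hx => ?_, fun x hx z => ?_⟩
  · have hj := j.isLt
    have h := hcoeff x hx j
    rw [Nat.descFactorial_eq_factorial_mul_choose, zero_pow (Nat.sub_ne_zero_of_lt hj),
      sub_zero] at h
    have hpj : μ ^ p = μ ^ (j : ℕ) * μ ^ (p - j) := by rw [← pow_add, Nat.add_sub_cancel' hj.le]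
    rw [hpj] at h
    push_cast at h
    have hfac : ((j : ℕ).factorial : ℂ) ≠ 0 := Nat.cast_ne_zero.2 (Nat.factorial_ne_zero _)
    field_simp
    linear_combination h
  · rw [eq_sum_range_of_iteratedDeriv_eq_zero (hd x hx) (fun j hj => hhigh j hj x hx) z,
      ← Fin.sum_univ_eq_sum_range]

end HighCoefficients

section Lift

variable {μ : ℂ} {p : ℕ} {φ : ℝ → ℝ}

theorem ContinuousOn.comp_continuous_Ici {ξ : ℂ → ℂ → ℝ → ℂ}
    (hξ : ContinuousOn (fun q : ℂ × ℂ × ℝ => ξ q.1 q.2.1 q.2.2) (univ ×ˢ univ ×ˢ Ici 0))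
    {X : Type*} [TopologicalSpace X] {f : X → ℂ × ℂ} {g : X → ℝ} {s : Set X}
    (hf : Continuous f) (hg : Continuous g) (hs : MapsTo g s (Ici 0)) :
    ContinuousOn (fun y => ξ (f y).1 (f y).2 (g y)) s :=
  hξ.comp (hf.fst.prodMk (hf.snd.prodMk hg)).continuousOn fun _ hy => ⟨trivial, trivial, hs hy⟩

theorem snd_lift_eq_add (hμ : 1 < ‖μ‖) (hp : 2 ≤ p) (horbit : BackwardOrbitsTendToZero φ)
    {ξ₂ : ℂ → ℂ → ℝ → ℂ}
    (hcont : ContinuousOn (fun q : ℂ × ℂ × ℝ => ξ₂ q.1 q.2.1 q.2.2) (univ ×ˢ univ ×ˢ Ici 0))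
    (hholo : ∀ x : ℝ, 0 ≤ x → Differentiable ℂ (fun z : ℂ × ℂ => ξ₂ z.1 z.2 x))
    (hbd : ∀ z₁ z₂ : ℂ, ξ₂ z₁ z₂ 0 = z₂)
    (hL : ∀ z₁ z₂ : ℂ, ∀ x : ℝ, 0 ≤ x →
      ξ₂ (μ ^ p * z₁ + z₂ ^ p) (μ * z₂) (φ x) = μ * ξ₂ z₁ z₂ x)
    {x : ℝ} (hx : 0 ≤ x) (z₁ z₂ : ℂ) : ξ₂ z₁ z₂ x = z₂ + ξ₂ 0 0 x := by
  have hμ₀ : μ ≠ 0 := norm_pos_iff.1 (one_pos.trans hμ)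
  set F : ℝ → ℂ × ℂ → ℂ := fun s w => ξ₂ w.1 w.2 s - w.2 - ξ₂ 0 0 s
  have hF : ContinuousOn ↿F (Ici 0 ×ˢ univ) :=
    ((hcont.comp_continuous_Ici continuous_snd continuous_fst fun _ h => h.1).sub
      continuous_snd.snd.continuousOn).sub
      (hcont.comp_continuous_Ici (f := fun _ => (0, 0)) continuous_const continuous_fst
        fun _ h => h.1)
  have hFd : ∀ s, 0 ≤ s → Differentiable ℂ (F s) := fun s hs =>
    ((hholo s hs).sub differentiable_snd).sub_const _
  set P : ℕ → ℂ × ℂ := fun n => (triangularMapInv μ p)^[n] (z₁, z₂)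
  obtain ⟨t, rfl, ht, hstep, hlim⟩ := horbit x hx
  have hFstep : ∀ n, F (t n) (P n) = μ * F (t (n + 1)) (P (n + 1)) := fun n => by
    have h₀ := hL 0 0 (t (n + 1)) (ht _)
    rw [mul_zero, zero_pow (by omega), add_zero, mul_zero] at h₀
    rw [← hstep n, show P n = triangularMap μ p (P (n + 1)) from
      iterate_triangularMapInv_eq hμ₀ _ n]
    simp only [F, triangularMap, hL _ _ _ (ht _), h₀]
    ring
  have hzero := apply_eq_zero_of_forall_eq_mul_succ hF (fun w => by simp [F, hbd]) hFd ht hlim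
    (c := fun _ => 0) (R := 0) hμ.le (fun _ => norm_zero.le)
    (fun n => by simpa using norm_iterate_triangularMapInv_le hμ hp _ n) (fun n => by simp [F])
    hFstep
  simp only [F, P, Function.iterate_zero, id] at hzero
  linear_combination hzero

theorem fst_lift_eq_add (hμ : 1 < ‖μ‖) (hp : 2 ≤ p) (horbit : BackwardOrbitsTendToZero φ)
    {ξ₁ ξ₂ : ℂ → ℂ → ℝ → ℂ}
    (hcont : ContinuousOn (fun q : ℂ × ℂ × ℝ => ξ₁ q.1 q.2.1 q.2.2) (univ ×ˢ univ ×ˢ Ici 0))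
    (hholo : ∀ x : ℝ, 0 ≤ x → Differentiable ℂ (fun z : ℂ × ℂ => ξ₁ z.1 z.2 x))
    (hbd : ∀ z₁ z₂ : ℂ, ξ₁ z₁ z₂ 0 = z₁)
    (hL : ∀ z₁ z₂ : ℂ, ∀ x : ℝ, 0 ≤ x →
      ξ₁ (μ ^ p * z₁ + z₂ ^ p) (μ * z₂) (φ x) = μ ^ p * ξ₁ z₁ z₂ x + (ξ₂ z₁ z₂ x) ^ p)
    (hξ₂ : ∀ x : ℝ, 0 ≤ x → ∀ z₁ z₂ : ℂ, ξ₂ z₁ z₂ x = ξ₂ 0 z₂ x)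
    {x : ℝ} (hx : 0 ≤ x) (z₁ z₂ : ℂ) : ξ₁ z₁ z₂ x = z₁ + ξ₁ 0 z₂ x := by
  have hμ₀ : μ ≠ 0 := norm_pos_iff.1 (one_pos.trans hμ)
  set F : ℝ → (ℂ × ℂ) × (ℂ × ℂ) → ℂ := fun s w =>
    ξ₁ w.1.1 w.1.2 s - ξ₁ w.2.1 w.2.2 s - (w.1.1 - w.2.1)
  have hF : ContinuousOn ↿F (Ici 0 ×ˢ univ) :=
    ((hcont.comp_continuous_Ici continuous_snd.fst continuous_fst fun _ h => h.1).sub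
      (hcont.comp_continuous_Ici continuous_snd.snd continuous_fst fun _ h => h.1)).sub
      (continuous_snd.fst.fst.sub continuous_snd.snd.fst).continuousOn
  have hFd : ∀ s, 0 ≤ s → Differentiable ℂ (F s) := fun s hs =>
    (((hholo s hs).comp differentiable_fst).sub ((hholo s hs).comp differentiable_snd)).sub
      (differentiable_fst.fst.sub differentiable_snd.fst)
  -- `F s` vanishes on the diagonal, and `triangularMapInv` brings points with equal second
  -- coordinates together at rate `|μ|⁻ᵖ`.
  set P : ℕ → ℂ × ℂ := fun n => (triangularMapInv μ p)^[n] (z₁, z₂)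
  set Q : ℕ → ℂ × ℂ := fun n => (triangularMapInv μ p)^[n] (0, z₂)
  have hPQ : ∀ n, P n - Q n = (z₁ / (μ ^ p) ^ n, 0) := fun n => by
    simpa using iterate_triangularMapInv_sub (μ := μ) (p := p) (P := (z₁, z₂)) (Q := (0, z₂)) rfl n
  obtain ⟨t, rfl, ht, hstep, hlim⟩ := horbit x hx
  have hFstep : ∀ n, F (t n) (P n, Q n) = μ ^ p * F (t (n + 1)) (P (n + 1), Q (n + 1)) :=
    fun n => by
      have hsnd : (P (n + 1)).2 = (Q (n + 1)).2 := sub_eq_zero.1 (congrArg Prod.snd (hPQ (n + 1)))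
      rw [← hstep n]
      simp only [F, P, Q, iterate_triangularMapInv_eq hμ₀ _ n, triangularMap, hL _ _ _ (ht _)]
      rw [hξ₂ _ (ht _) (P (n + 1)).1, hξ₂ _ (ht _) (Q (n + 1)).1, hsnd]
      ring
  have hzero := apply_eq_zero_of_forall_eq_mul_succ hF (fun w => by simp [F, hbd]) hFd ht hlim
    (c := fun n => (Q n, Q n)) (w := fun n => (P n, Q n)) (r := μ ^ p) (K := ‖z₁‖)
    (by rw [norm_pow]; exact one_le_pow₀ hμ.le)
    (fun n => by
      rw [Prod.norm_def, max_self]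
      exact le_trans (le_mul_of_one_le_left (norm_nonneg _) (one_le_pow₀ hμ.le))
        (norm_iterate_triangularMapInv_le hμ hp _ n))
    (fun n => by
      simp only [Prod.mk_sub_mk, sub_self, hPQ, Prod.norm_def, norm_zero, norm_div, norm_pow]
      rw [max_eq_left (by positivity), max_eq_left (by positivity),
        mul_div_cancel₀ _ (by positivity)])
    (fun n => by simp [F]) hFstep
  simp only [F, P, Q, Function.iterate_zero, id] at hzero
  linear_combination hzero

end Lift

theorem case_5_classification_general (μ : ℂ) (hμ : 1 < ‖μ‖)
    (p : ℕ) (hp : 2 ≤ p)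
    (φ : ℝ → ℝ)
    (hφcont : ContinuousOn φ (Set.Ici 0))
    (hφbij : Set.BijOn φ (Set.Ici 0) (Set.Ici 0))
    (hexp : ∀ x : ℝ, 0 < x → x < φ x)
    (ξ₁ ξ₂ : ℂ → ℂ → ℝ → ℂ)
    (hcont₁ : ContinuousOn (fun q : ℂ × ℂ × ℝ => ξ₁ q.1 q.2.1 q.2.2)
      (Set.univ ×ˢ Set.univ ×ˢ Set.Ici 0))
    (hcont₂ : ContinuousOn (fun q : ℂ × ℂ × ℝ => ξ₂ q.1 q.2.1 q.2.2)
      (Set.univ ×ˢ Set.univ ×ˢ Set.Ici 0))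
    (hholo₁ : ∀ x : ℝ, 0 ≤ x → Differentiable ℂ (fun z : ℂ × ℂ => ξ₁ z.1 z.2 x))
    (hholo₂ : ∀ x : ℝ, 0 ≤ x → Differentiable ℂ (fun z : ℂ × ℂ => ξ₂ z.1 z.2 x))
    (hbd₁ : ∀ z₁ z₂ : ℂ, ξ₁ z₁ z₂ 0 = z₁)
    (hbd₂ : ∀ z₁ z₂ : ℂ, ξ₂ z₁ z₂ 0 = z₂)
    (hL1 : ∀ z₁ z₂ : ℂ, ∀ x : ℝ, 0 ≤ x →
      ξ₁ (μ ^ p * z₁ + z₂ ^ p) (μ * z₂) (φ x)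
        = μ ^ p * ξ₁ z₁ z₂ x + (ξ₂ z₁ z₂ x) ^ p)
    (hL2 : ∀ z₁ z₂ : ℂ, ∀ x : ℝ, 0 ≤ x →
      ξ₂ (μ ^ p * z₁ + z₂ ^ p) (μ * z₂) (φ x) = μ * ξ₂ z₁ z₂ x) :
    ∃ a : Fin p → ℝ → ℂ, ∃ b : ℝ → ℂ,
      (∀ j : Fin p, ContinuousOn (a j) (Set.Ici 0)) ∧
      ContinuousOn b (Set.Ici 0) ∧
      (∀ j : Fin p, a j 0 = 0) ∧ b 0 = 0 ∧
      (∀ x : ℝ, 0 ≤ x → b (φ x) = μ * b x) ∧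
      (∀ j : Fin p, ∀ x : ℝ, 0 ≤ x →
        a j (φ x) = μ ^ (p - (j : ℕ)) * a j x
          + ((p.choose (j : ℕ) : ℂ) / μ ^ (j : ℕ)) * (b x) ^ (p - (j : ℕ))) ∧
      ∀ z₁ z₂ : ℂ, ∀ x : ℝ, 0 ≤ x →
        ξ₁ z₁ z₂ x = z₁ + ∑ j : Fin p, a j x * z₂ ^ (j : ℕ) ∧
        ξ₂ z₁ z₂ x = z₂ + b x := by
  have horbit := backwardOrbitsTendToZero_of_expanding hφcont hφbij.surjOn hexp
  have hξ₂ : ∀ x, 0 ≤ x → ∀ z₁ z₂, ξ₂ z₁ z₂ x = z₂ + ξ₂ 0 0 x := fun x hx =>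
    snd_lift_eq_add hμ hp horbit hcont₂ hholo₂ hbd₂ hL2 hx
  have hξ₁ : ∀ x, 0 ≤ x → ∀ z₁ z₂, ξ₁ z₁ z₂ x = z₁ + ξ₁ 0 z₂ x := fun x hx =>
    fst_lift_eq_add hμ hp horbit hcont₁ hholo₁ hbd₁ hL1
      (fun s hs z₁ z₂ => by rw [hξ₂ s hs z₁, hξ₂ s hs 0 z₂]) hx
  have hg : ∀ s, 0 ≤ s → ∀ z,
      ξ₁ 0 (μ * z) (φ s) = μ ^ p * ξ₁ 0 z s + ((z + ξ₂ 0 0 s) ^ p - z ^ p) := fun s hs z => by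
    have h := hL1 0 z s hs
    rw [hξ₁ _ (hφbij.mapsTo hs), hξ₂ s hs] at h
    linear_combination h
  obtain ⟨a, ha_cont, ha₀, ha_rec, ha⟩ :=
    exists_coeffs_of_functional_eq (g := fun x z => ξ₁ 0 z x)
    (hcont₁.comp_continuous_Ici (continuous_const.prodMk continuous_snd) continuous_fst
      fun _ h => h.1)
    (fun x hx => (hholo₁ x hx).comp ((differentiable_const 0).prodMk differentiable_id))
    (fun z => hbd₁ 0 z) hφbij.mapsTo horbit hμ.le hg
  refine ⟨a, fun x => ξ₂ 0 0 x, ha_cont,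
    hcont₂.comp_continuous_Ici (f := fun _ => (0, 0)) continuous_const continuous_id fun _ h => h,
    ha₀, hbd₂ 0 0,
    fun x hx => by simpa [zero_pow (by omega : p ≠ 0)] using hL2 0 0 x hx, ha_rec,
    fun z₁ z₂ x hx => ⟨by rw [hξ₁ x hx, ha x hx], hξ₂ x hx z₁ z₂⟩⟩

/-- Case 5 of Section 3.2 (underlying Theorem 3.13): for
`G(z₁,z₂) = (μᵖz₁ + z₂ᵖ, μz₂)` with `|μ| > 1`, `p ≥ 2`, any leafwise-holomorphic
lift `(ξ₁, ξ₂)` restricting to the identity on the boundary and equivariant for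
`T` has the form `ξ₁ = z₁ + Σ_{j<p} aⱼ(x)·z₂ʲ`, `ξ₂ = z₂ + b(x)` where
`b ∈ 𝒵_{φ,μ}` and `aⱼ(φ(x)) = μ^{p−j}·aⱼ(x) + cⱼ·b(x)^{p−j}` with
`cⱼ = C(p,j)·μ^{−j}`. -/
theorem case_5_classification (μ : ℂ) (hμ : 1 < ‖μ‖)
    (p : ℕ) (hp : 2 ≤ p)
    (φ : ℝ → ℝ)
    (hφcont : ContinuousOn φ (Set.Ici 0))
    (hφmono : StrictMonoOn φ (Set.Ici 0))
    (hφbij : Set.BijOn φ (Set.Ici 0) (Set.Ici 0))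
    (hφ0 : φ 0 = 0)
    (hexp : ∀ x : ℝ, 0 < x → x < φ x)
    (ξ₁ ξ₂ : ℂ → ℂ → ℝ → ℂ)
    (hcont₁ : ContinuousOn (fun q : ℂ × ℂ × ℝ => ξ₁ q.1 q.2.1 q.2.2)
      (Set.univ ×ˢ Set.univ ×ˢ Set.Ici 0))
    (hcont₂ : ContinuousOn (fun q : ℂ × ℂ × ℝ => ξ₂ q.1 q.2.1 q.2.2)
      (Set.univ ×ˢ Set.univ ×ˢ Set.Ici 0))
    (hholo₁ : ∀ x : ℝ, 0 ≤ x → Differentiable ℂ (fun z : ℂ × ℂ => ξ₁ z.1 z.2 x))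
    (hholo₂ : ∀ x : ℝ, 0 ≤ x → Differentiable ℂ (fun z : ℂ × ℂ => ξ₂ z.1 z.2 x))
    (hbd₁ : ∀ z₁ z₂ : ℂ, ξ₁ z₁ z₂ 0 = z₁)
    (hbd₂ : ∀ z₁ z₂ : ℂ, ξ₂ z₁ z₂ 0 = z₂)
    (hL1 : ∀ z₁ z₂ : ℂ, ∀ x : ℝ, 0 ≤ x →
      ξ₁ (μ ^ p * z₁ + z₂ ^ p) (μ * z₂) (φ x)
        = μ ^ p * ξ₁ z₁ z₂ x + (ξ₂ z₁ z₂ x) ^ p)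
    (hL2 : ∀ z₁ z₂ : ℂ, ∀ x : ℝ, 0 ≤ x →
      ξ₂ (μ ^ p * z₁ + z₂ ^ p) (μ * z₂) (φ x) = μ * ξ₂ z₁ z₂ x) :
    ∃ a : Fin p → ℝ → ℂ, ∃ b : ℝ → ℂ,
      (∀ j : Fin p, ContinuousOn (a j) (Set.Ici 0)) ∧
      ContinuousOn b (Set.Ici 0) ∧
      (∀ j : Fin p, a j 0 = 0) ∧ b 0 = 0 ∧
      (∀ x : ℝ, 0 ≤ x → b (φ x) = μ * b x) ∧
      (∀ j : Fin p, ∀ x : ℝ, 0 ≤ x →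
        a j (φ x) = μ ^ (p - (j : ℕ)) * a j x
          + ((p.choose (j : ℕ) : ℂ) / μ ^ (j : ℕ)) * (b x) ^ (p - (j : ℕ))) ∧
      ∀ z₁ z₂ : ℂ, ∀ x : ℝ, 0 ≤ x →
        ξ₁ z₁ z₂ x = z₁ + ∑ j : Fin p, a j x * z₂ ^ (j : ℕ) ∧
        ξ₂ z₁ z₂ x = z₂ + b x :=
  case_5_classification_general μ hμ p hp φ hφcont hφbij hexp ξ₁ ξ₂ hcont₁ hcont₂ hholo₁ hholo₂ hbd₁
    hbd₂ hL1 hL2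
end

section
/- Let n ≥ 1, let λ ∈ ℂ with |λ| > 1, and let φ : [0,∞) → [0,∞) be a homeomorphism with φ(0) = 0 and φ(x) > x for all x > 0. Suppose ξ : ℂⁿ × [0,∞) → ℂⁿ is continuous, for each fixed x ≥ 0 the map z ↦ ξ(z,x) is holomorphic (entire) on ℂⁿ, ξ(z,0) = z for all z ∈ ℂⁿ, and ξ(λz, φ(x)) = λ·ξ(z,x) for all z ∈ ℂⁿ and x ≥ 0. Then there exists a continuous function a : [0,∞) → ℂⁿ with a(0) = 0 and a(φ(x)) = λ·a(x) for all x ≥ 0 such that ξ(z,x) = z + a(x) for all (z,x). (Classification underlying Example 4.3: the kernel part Aut(R,H) ≅ (𝒵_{φ,λ})ⁿ ⋊ Z_φ for G = λ·Iₙ) -/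
/-!
Put `F(w, y) = ξ(w, y) - w`; it vanishes at `y = 0` and satisfies `F(λw, φ y) = λ F(w, y)`.
Since `φ` expands, every `x ≥ 0` has a backward orbit `y₀ = x`, `φ(y_{k+1}) = y_k`, tending
to `0`, and iterating the equivariance gives
`F(z, x) - F(0, x) = λᵏ (F(λ⁻ᵏ z, y_k) - F(0, y_k))`.
By joint continuity `F(·, y_k)` is uniformly small on a fixed ball, so the Schwarz lemma bounds
the bracket by `ε ‖λ⁻ᵏ z‖`, which exactly compensates the factor `λᵏ`.
Hence `F(z, x) = F(0, x)`, i.e. `ξ(z, x) = z + a(x)` with `a = ξ(0, ·)`.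
-/

open Filter Metric Set Topology

section BackwardOrbit

variable {φ : ℝ → ℝ}

lemma exists_backward_orbit (hφ : SurjOn φ (Ici 0) (Ici 0)) {x : ℝ} (hx : 0 ≤ x) :
    ∃ y : ℕ → ℝ, y 0 = x ∧ (∀ k, 0 ≤ y k) ∧ ∀ k, φ (y (k + 1)) = y k := by
  choose ψ hψ hφψ using fun w : Ici (0 : ℝ) => hφ w.2
  let y : ℕ → Ici (0 : ℝ) := fun k => (fun w => ⟨ψ w, hψ w⟩)^[k] ⟨x, hx⟩
  refine ⟨fun k => y k, rfl, fun k => (y k).2, fun k => ?_⟩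
  simp only [y, Function.iterate_succ_apply']
  exact hφψ _

lemma tendsto_zero_of_backward_orbit (hφ : ContinuousOn φ (Ici 0))
    (hexp : ∀ x, 0 < x → x < φ x) {y : ℕ → ℝ} (hy0 : ∀ k, 0 ≤ y k)
    (hy : ∀ k, φ (y (k + 1)) = y k) : Tendsto y atTop (𝓝 0) := by
  have hanti : Antitone y := antitone_nat_of_succ_le fun k => by
    rcases (hy0 (k + 1)).eq_or_lt with h | h
    · exact h ▸ hy0 k
    · exact (hy k ▸ hexp _ h).le
  have hL := tendsto_atTop_ciInf hanti ⟨0, by rintro _ ⟨k, rfl⟩; exact hy0 k⟩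
  set L := ⨅ k, y k
  have hL0 : 0 ≤ L := ge_of_tendsto' hL hy0
  have hfix : φ L = L := by
    have hshift : Tendsto (fun k => y (k + 1)) atTop (𝓝[Ici 0] L) :=
      tendsto_nhdsWithin_iff.2
        ⟨hL.comp (tendsto_add_atTop_nat 1), .of_forall fun k => hy0 (k + 1)⟩
    refine tendsto_nhds_unique ((hφ L hL0).tendsto.comp hshift) ?_
    simpa only [Function.comp_def, hy] using hL
  rcases hL0.eq_or_lt with hzero | hpos
  · rwa [← hzero] at hL
  · exact absurd hfix (hexp L hpos).ne'

end BackwardOrbit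

lemma apply_pow_smul_of_apply_smul {M V W : Type*} [Monoid M] [MulAction M V]
    [MulAction M W] {g : M} {G : ℕ → V → W} (h : ∀ k w, G k (g • w) = g • G (k + 1) w)
    (k : ℕ) (w : V) :
    G 0 (g ^ k • w) = g ^ k • G k w := by
  induction k generalizing w with
  | zero => simp
  | succ k ih => rw [pow_succ, mul_smul, ih, h, smul_smul, ← pow_succ]

section Equivariant

variable {V E : Type*} [NormedAddCommGroup V] [ProperSpace V] [NormedAddCommGroup E]

lemma eventually_mapsTo_ball_closedBall {F : V → ℝ → E}
    (hcont : ContinuousOn (fun q : V × ℝ => F q.1 q.2) (univ ×ˢ Ici 0))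
    (hinit : ∀ w, F w 0 = 0) (R : ℝ) {ε : ℝ} (hε : 0 < ε) :
    ∀ᶠ y in 𝓝[Ici 0] 0, MapsTo (F · y) (ball 0 R) (closedBall (F 0 y) ε) := by
  have hswap : ContinuousOn (Function.uncurry fun y w => F w y) (Ici 0 ×ˢ closedBall 0 R) :=
    hcont.comp continuous_swap.continuousOn fun q hq => ⟨trivial, hq.1⟩
  obtain ⟨v, hv, hclose⟩ := (isCompact_closedBall (0 : V) R).mem_uniformity_of_prod hswap
    self_mem_Ici (dist_mem_uniformity (half_pos hε))
  filter_upwards [hv] with y hy w hw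
  have hw' : dist (F w y) 0 < ε / 2 := by
    simpa [hinit] using hclose y hy w (ball_subset_closedBall hw)
  have h0 : dist (F 0 y) 0 < ε / 2 := by
    simpa [hinit] using hclose y hy 0 (mem_closedBall_self (nonempty_ball.1 ⟨w, hw⟩).le)
  rw [mem_closedBall]
  linarith [dist_triangle_right (F w y) (F 0 y) 0]

variable [NormedSpace ℂ V] [NormedSpace ℂ E]

theorem apply_eq_apply_zero_of_equivariant {lam : ℂ} (hlam : 1 < ‖lam‖) {φ : ℝ → ℝ}
    (hφcont : ContinuousOn φ (Ici 0)) (hφsurj : SurjOn φ (Ici 0) (Ici 0))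
    (hexp : ∀ x, 0 < x → x < φ x) {F : V → ℝ → E}
    (hcont : ContinuousOn (fun q : V × ℝ => F q.1 q.2) (univ ×ˢ Ici 0))
    (hholo : ∀ y, 0 ≤ y → Differentiable ℂ (F · y)) (hinit : ∀ w, F w 0 = 0)
    (heq : ∀ w y, 0 ≤ y → F (lam • w) (φ y) = lam • F w y) {z : V} {x : ℝ}
    (hx : 0 ≤ x) :
    F z x = F 0 x := by
  have hlam0 : lam ≠ 0 := norm_pos_iff.1 (one_pos.trans hlam)
  obtain ⟨y, rfl, hy0, hy⟩ := exists_backward_orbit hφsurj hx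
  have hylim : Tendsto y atTop (𝓝[Ici 0] 0) := tendsto_nhdsWithin_iff.2
    ⟨tendsto_zero_of_backward_orbit hφcont hexp hy0 hy, .of_forall hy0⟩
  have hpow : ∀ k w, F (lam ^ k • w) (y 0) - F 0 (y 0) = lam ^ k • (F w (y k) - F 0 (y k)) :=
    apply_pow_smul_of_apply_smul (G := fun k w => F w (y k) - F 0 (y k)) fun k w => by
      have h0 := heq 0 _ (hy0 (k + 1))
      rw [smul_zero] at h0
      simp only [← hy k, heq w _ (hy0 (k + 1)), h0, smul_sub]
  set R := ‖z‖ + 1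
  refine eq_of_forall_dist_le fun ε hε => ?_
  obtain ⟨k, hk⟩ :=
    (hylim.eventually (eventually_mapsTo_ball_closedBall hcont hinit R hε)).exists
  set s := (lam ^ k)⁻¹
  have hs : ‖s‖ ≤ 1 := by
    rw [norm_inv, norm_pow]
    exact inv_le_one_of_one_le₀ (one_le_pow₀ hlam.le)
  have hsz : s • z ∈ ball 0 R := by
    rw [mem_ball_zero_iff, norm_smul]
    nlinarith [norm_nonneg s, norm_nonneg z]
  have hschwarz := Complex.dist_le_div_mul_dist_of_mapsTo_ball
    (hholo _ (hy0 k)).differentiableOn hk hsz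
  have hzs : lam ^ k • s • z = z := smul_inv_smul₀ (pow_ne_zero k hlam0) z
  calc dist (F z (y 0)) (F 0 (y 0))
      = ‖lam ^ k‖ * dist (F (s • z) (y k)) (F 0 (y k)) := by
        rw [dist_eq_norm, dist_eq_norm, ← norm_smul, ← hpow, hzs]
    _ ≤ ‖lam ^ k‖ * (ε / R * dist (s • z) 0) := by gcongr
    _ = ε * (‖z‖ / R) := by
        rw [dist_zero_right, norm_smul, norm_inv, norm_pow]
        field_simp
    _ ≤ ε := mul_le_of_le_one_right hε.le ((div_le_one (by positivity)).2 (by linarith))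

end Equivariant

theorem example_4_3_classification_general (n : ℕ)
    (lam : ℂ) (hlam : 1 < ‖lam‖)
    (φ : ℝ → ℝ)
    (hφcont : ContinuousOn φ (Set.Ici 0))
    (hφbij : Set.BijOn φ (Set.Ici 0) (Set.Ici 0))
    (hexp : ∀ x : ℝ, 0 < x → x < φ x)
    (ξ : (Fin n → ℂ) → ℝ → (Fin n → ℂ))
    (hcont : ContinuousOn (fun q : (Fin n → ℂ) × ℝ => ξ q.1 q.2)
      (Set.univ ×ˢ Set.Ici 0))
    (hholo : ∀ x : ℝ, 0 ≤ x → Differentiable ℂ (fun z : Fin n → ℂ => ξ z x))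
    (hbd : ∀ z : Fin n → ℂ, ξ z 0 = z)
    (heq : ∀ z : Fin n → ℂ, ∀ x : ℝ, 0 ≤ x →
      ξ (lam • z) (φ x) = lam • ξ z x) :
    ∃ a : ℝ → (Fin n → ℂ),
      ContinuousOn a (Set.Ici 0) ∧ a 0 = 0 ∧
      (∀ x : ℝ, 0 ≤ x → a (φ x) = lam • a x) ∧
      ∀ z : Fin n → ℂ, ∀ x : ℝ, 0 ≤ x → ξ z x = z + a x := by
  have hshift : ∀ z x, 0 ≤ x → ξ z x - z = ξ 0 x - 0 := fun z x hx =>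
    apply_eq_apply_zero_of_equivariant (F := fun w y => ξ w y - w) hlam hφcont hφbij.surjOn
      hexp (hcont.sub continuous_fst.continuousOn)
      (fun y hy => (hholo y hy).sub differentiable_id) (fun w => sub_eq_zero.2 (hbd w))
      (fun w y hy => by simp only [heq w y hy, smul_sub]) hx
  refine ⟨fun x => ξ 0 x, ?_, hbd 0, fun x hx => by simpa using heq 0 x hx, fun z x hx => ?_⟩
  · exact hcont.comp (continuous_const.prodMk continuous_id).continuousOn
      fun x hx => ⟨trivial, hx⟩
  · rw [← sub_eq_iff_eq_add', hshift z x hx, sub_zero]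

/-- Classification underlying Example 4.3: for `G = λ·Iₙ` with `|λ| > 1` and a
homeomorphism `φ` of `[0,∞)` with `φ(0) = 0` and `φ(x) > x` for `x > 0`, any
leafwise-holomorphic lift `ξ` restricting to the identity on the boundary and
equivariant for `(λz, φ(x))` has the form `ξ(z,x) = z + a(x)` with
`a ∈ (𝒵_{φ,λ})ⁿ`. -/
theorem example_4_3_classification (n : ℕ) (hn : 1 ≤ n)
    (lam : ℂ) (hlam : 1 < ‖lam‖)
    (φ : ℝ → ℝ)
    (hφcont : ContinuousOn φ (Set.Ici 0))
    (hφmono : StrictMonoOn φ (Set.Ici 0))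
    (hφbij : Set.BijOn φ (Set.Ici 0) (Set.Ici 0))
    (hφ0 : φ 0 = 0)
    (hexp : ∀ x : ℝ, 0 < x → x < φ x)
    (ξ : (Fin n → ℂ) → ℝ → (Fin n → ℂ))
    (hcont : ContinuousOn (fun q : (Fin n → ℂ) × ℝ => ξ q.1 q.2)
      (Set.univ ×ˢ Set.Ici 0))
    (hholo : ∀ x : ℝ, 0 ≤ x → Differentiable ℂ (fun z : Fin n → ℂ => ξ z x))
    (hbd : ∀ z : Fin n → ℂ, ξ z 0 = z)
    (heq : ∀ z : Fin n → ℂ, ∀ x : ℝ, 0 ≤ x →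
      ξ (lam • z) (φ x) = lam • ξ z x) :
    ∃ a : ℝ → (Fin n → ℂ),
      ContinuousOn a (Set.Ici 0) ∧ a 0 = 0 ∧
      (∀ x : ℝ, 0 ≤ x → a (φ x) = lam • a x) ∧
      ∀ z : Fin n → ℂ, ∀ x : ℝ, 0 ≤ x → ξ z x = z + a x :=
  example_4_3_classification_general n lam hlam φ hφcont hφbij hexp ξ hcont hholo hbd heq
end
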